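/- For a > 0 and x ∈ ℝ³ with x ≠ 0, the solution of −Δf + a²f = e^{−|x|²} in ℝ³ is given by f(x) = (√π/8) · (e^{−|x|²}/|x|) · [w(i(a/2 − |x|)) − w(i(a/2 + |x|))], where w(z) = e^{−z²} erfc(−iz) is the scaled complementary error function (Faddeeva function). -/

import Mathlib

/-!
The solution is radial, `f x = H ‖x‖ / ‖x‖`, and in `ℝ³` the Laplacian of `H ‖x‖ / ‖x‖` is
`H'' ‖x‖ / ‖x‖`, so the equation reduces to the ODE `-H'' + a² H = r e^{-r²}`.
Since `w' s = 2 s w s - 2/√π` for `w = wofzI`, the functions `u± r = e^{-r²} w (a/2 ∓ r)` satisfy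
`u±' = ∓ a u± ± (2/√π) e^{-r²}`, so `H = (√π/8) (u₊ - u₋)` has `H' = e^{-r²}/2 - (a√π/8) (u₊ + u₋)`
and `H'' = a² H - r e^{-r²}`.
-/

open Real MeasureTheory

/-- The Gauss error function `erf(t) = (2/√π) ∫_0^t e^(-s²) ds`. -/
noncomputable def erf (t : ℝ) : ℝ :=
  (2 / Real.sqrt π) * ∫ s in (0:ℝ)..t, Real.exp (-s ^ 2)

/-- The complementary error function. -/
noncomputable def erfc (t : ℝ) : ℝ := 1 - erf t

/-- The Faddeeva (scaled complementary error) function evaluated at `i s`, `s` real: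
`w(i s) = e^(s²) erfc(s)`. -/
noncomputable def wofzI (s : ℝ) : ℝ := Real.exp (s ^ 2) * erfc s

/-- The Laplacian on `ℝⁿ` as the sum of second derivatives along coordinate directions. -/
noncomputable def laplacian {n : ℕ} (f : EuclideanSpace ℝ (Fin n) → ℝ)
    (x : EuclideanSpace ℝ (Fin n)) : ℝ :=
  ∑ i : Fin n, iteratedDeriv 2 (fun t : ℝ => f (x + t • EuclideanSpace.single i (1:ℝ))) 0

open Filter Topology
open scoped RealInnerProductSpace

section RadialLaplacian

variable {F : Type*} [NormedAddCommGroup F] [InnerProductSpace ℝ F]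

theorem HasDerivAt.norm {f : ℝ → F} {f' : F} {t : ℝ} (hf : HasDerivAt f f' t) (h0 : f t ≠ 0) :
    HasDerivAt (fun s => ‖f s‖) (⟪f t, f'⟫ / ‖f t‖) t := by
  have h := hf.norm_sq.sqrt (by positivity)
  simp only [Real.sqrt_sq (norm_nonneg _)] at h
  convert h using 1
  field_simp

theorem iteratedDeriv_two_comp_norm_add_smul {g g' g'' : ℝ → ℝ}
    (hg : ∀ r, 0 < r → HasDerivAt g (g' r) r) (hg' : ∀ r, 0 < r → HasDerivAt g' (g'' r) r)
    {x : F} (hx : x ≠ 0) (v : F) :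
    iteratedDeriv 2 (fun t : ℝ => g ‖x + t • v‖) 0 =
      g'' ‖x‖ * (⟪x, v⟫ / ‖x‖) ^ 2 + g' ‖x‖ * (‖v‖ ^ 2 - (⟪x, v⟫ / ‖x‖) ^ 2) / ‖x‖ := by
  have hr : 0 < ‖x‖ := norm_pos_iff.2 hx
  have hline : ∀ t : ℝ, HasDerivAt (fun s : ℝ => x + s • v) v t := fun t => by
    simpa using ((hasDerivAt_id t).smul_const v).const_add x
  have hnorm : ∀ t : ℝ, x + t • v ≠ 0 →
      HasDerivAt (fun s : ℝ => ‖x + s • v‖) (⟪x + t • v, v⟫ / ‖x + t • v‖) t :=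
    fun t ht => (hline t).norm ht
  have hne : ∀ᶠ t in 𝓝 (0 : ℝ), x + t • v ≠ 0 :=
    (hline 0).continuousAt.eventually_ne (by simpa using hx)
  have hderiv : deriv (fun t : ℝ => g ‖x + t • v‖) =ᶠ[𝓝 0]
      fun t : ℝ => g' ‖x + t • v‖ * (⟪x + t • v, v⟫ / ‖x + t • v‖) :=
    hne.mono fun t ht => ((hg _ (norm_pos_iff.2 ht)).comp t (hnorm t ht)).deriv
  have hnorm0 : HasDerivAt (fun s : ℝ => ‖x + s • v‖) (⟪x, v⟫ / ‖x‖) 0 := by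
    simpa using hnorm 0 (by simpa using hx)
  have hinner : HasDerivAt (fun t : ℝ => ⟪x + t • v, v⟫) (‖v‖ ^ 2) 0 := by
    simpa [real_inner_self_eq_norm_sq] using (hline 0).inner ℝ (hasDerivAt_const (0 : ℝ) v)
  have hcomp : HasDerivAt (fun t : ℝ => g' ‖x + t • v‖) (g'' ‖x‖ * (⟪x, v⟫ / ‖x‖)) 0 := by
    have hg'0 : HasDerivAt g' (g'' ‖x‖) ‖x + (0 : ℝ) • v‖ := by simpa using hg' _ hr
    exact hg'0.comp 0 hnorm0
  have hquot : HasDerivAt (fun t : ℝ => ⟪x + t • v, v⟫ / ‖x + t • v‖)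
      ((‖v‖ ^ 2 * ‖x‖ - ⟪x, v⟫ * (⟪x, v⟫ / ‖x‖)) / ‖x‖ ^ 2) 0 := by
    simpa using hinner.fun_div hnorm0 (by simpa using hr.ne')
  rw [iteratedDeriv_succ, iteratedDeriv_one, hderiv.deriv_eq, (hcomp.fun_mul hquot).deriv]
  simp only [zero_smul, add_zero]
  field_simp

end RadialLaplacian

theorem laplacian_comp_norm {n : ℕ} {g g' g'' : ℝ → ℝ}
    (hg : ∀ r, 0 < r → HasDerivAt g (g' r) r) (hg' : ∀ r, 0 < r → HasDerivAt g' (g'' r) r)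
    {x : EuclideanSpace ℝ (Fin n)} (hx : x ≠ 0) :
    laplacian (fun y => g ‖y‖) x = g'' ‖x‖ + (n - 1) * g' ‖x‖ / ‖x‖ := by
  have hr : 0 < ‖x‖ := norm_pos_iff.2 hx
  have hsum : ∑ i, (⟪x, EuclideanSpace.single i (1 : ℝ)⟫ / ‖x‖) ^ 2 = 1 := by
    simp only [EuclideanSpace.inner_single_right, one_mul, conj_trivial, div_pow,
      ← Finset.sum_div, ← EuclideanSpace.real_norm_sq_eq]
    field_simp
  have hterm : ∀ i,
      iteratedDeriv 2 (fun t : ℝ => g ‖x + t • EuclideanSpace.single i (1 : ℝ)‖) 0 =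
        g' ‖x‖ / ‖x‖ +
          (g'' ‖x‖ - g' ‖x‖ / ‖x‖) * (⟪x, EuclideanSpace.single i (1 : ℝ)⟫ / ‖x‖) ^ 2 := by
    intro i
    rw [iteratedDeriv_two_comp_norm_add_smul hg hg' hx, PiLp.norm_single, norm_one]
    ring
  simp only [laplacian, hterm, Finset.sum_add_distrib, ← Finset.mul_sum, hsum, Finset.sum_const,
    Finset.card_univ, Fintype.card_fin, nsmul_eq_mul]
  field_simp
  ring

theorem laplacian_div_norm {h h' h'' : ℝ → ℝ}
    (hh : ∀ r, 0 < r → HasDerivAt h (h' r) r) (hh' : ∀ r, 0 < r → HasDerivAt h' (h'' r) r)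
    {x : EuclideanSpace ℝ (Fin 3)} (hx : x ≠ 0) :
    laplacian (fun y => h ‖y‖ / ‖y‖) x = h'' ‖x‖ / ‖x‖ := by
  have hg : ∀ r : ℝ, 0 < r → HasDerivAt (fun s => h s / s) (h' r / r - h r / r ^ 2) r :=
    fun r hr => ((hh r hr).fun_div (hasDerivAt_id r) hr.ne').congr_deriv <| by
      simp only [id]; field_simp
  have hg' : ∀ r : ℝ, 0 < r → HasDerivAt (fun s => h' s / s - h s / s ^ 2)
      (h'' r / r - 2 * h' r / r ^ 2 + 2 * h r / r ^ 3) r := fun r hr =>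
    (((hh' r hr).fun_div (hasDerivAt_id r) hr.ne').sub
      ((hh r hr).fun_div (hasDerivAt_pow 2 r) (by positivity))).congr_deriv <| by
      simp only [id]; field_simp; ring
  rw [laplacian_comp_norm hg hg' hx]
  have hr : 0 < ‖x‖ := norm_pos_iff.2 hx
  field_simp
  ring

theorem hasDerivAt_erf (t : ℝ) : HasDerivAt erf (2 / √π * exp (-t ^ 2)) t := by
  have hc : Continuous fun s : ℝ => exp (-s ^ 2) := by fun_prop
  exact ((intervalIntegral.integral_hasStrictDerivAt_right (hc.intervalIntegrable 0 t)
    (hc.stronglyMeasurableAtFilter _ _) hc.continuousAt).hasDerivAt).const_mul (2 / √π)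

theorem hasDerivAt_wofzI (s : ℝ) : HasDerivAt wofzI (2 * s * wofzI s - 2 / √π) s := by
  have hexp : HasDerivAt (fun u : ℝ => exp (u ^ 2)) (exp (s ^ 2) * (2 * s)) s := by
    simpa using (hasDerivAt_pow 2 s).exp
  refine (hexp.mul ((hasDerivAt_erf s).const_sub 1)).congr_deriv ?_
  have hinv : exp (s ^ 2) * exp (-s ^ 2) = 1 := by rw [← exp_add]; simp
  simp only [wofzI, erfc]
  linear_combination -(2 / √π) * hinv

theorem hasDerivAt_exp_neg_sq (r : ℝ) :
    HasDerivAt (fun s => exp (-s ^ 2)) (-2 * r * exp (-r ^ 2)) r :=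
  ((hasDerivAt_pow 2 r).fun_neg.exp).congr_deriv (by ring)

theorem hasDerivAt_exp_neg_sq_mul_wofzI_sub (c r : ℝ) :
    HasDerivAt (fun s => exp (-s ^ 2) * wofzI (c - s))
      (2 / √π * exp (-r ^ 2) - 2 * c * (exp (-r ^ 2) * wofzI (c - r))) r := by
  have hw := (hasDerivAt_wofzI (c - r)).comp r ((hasDerivAt_id r).const_sub c)
  refine ((hasDerivAt_exp_neg_sq r).mul hw).congr_deriv ?_
  rw [Function.comp_apply]
  ring

theorem hasDerivAt_exp_neg_sq_mul_wofzI_add (c r : ℝ) :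
    HasDerivAt (fun s => exp (-s ^ 2) * wofzI (c + s))
      (2 * c * (exp (-r ^ 2) * wofzI (c + r)) - 2 / √π * exp (-r ^ 2)) r := by
  have hw := (hasDerivAt_wofzI (c + r)).comp r ((hasDerivAt_id r).const_add c)
  refine ((hasDerivAt_exp_neg_sq r).mul hw).congr_deriv ?_
  rw [Function.comp_apply]
  ring

/-- `‖x‖` times the solution, as a function of `r = ‖x‖`. -/
noncomputable def yukawaProfile (a r : ℝ) : ℝ :=
  √π / 8 * (exp (-r ^ 2) * wofzI (a / 2 - r) - exp (-r ^ 2) * wofzI (a / 2 + r))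

noncomputable def yukawaProfileDeriv (a r : ℝ) : ℝ :=
  exp (-r ^ 2) / 2 -
    a * √π / 8 * (exp (-r ^ 2) * wofzI (a / 2 - r) + exp (-r ^ 2) * wofzI (a / 2 + r))

theorem hasDerivAt_yukawaProfile (a r : ℝ) :
    HasDerivAt (yukawaProfile a) (yukawaProfileDeriv a r) r := by
  have hsqrt : √π ≠ 0 := by positivity
  refine (((hasDerivAt_exp_neg_sq_mul_wofzI_sub (a / 2) r).sub
    (hasDerivAt_exp_neg_sq_mul_wofzI_add (a / 2) r)).const_mul (√π / 8)).congr_deriv ?_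
  simp only [yukawaProfileDeriv]
  field_simp
  ring

theorem hasDerivAt_yukawaProfileDeriv (a r : ℝ) :
    HasDerivAt (yukawaProfileDeriv a) (a ^ 2 * yukawaProfile a r - r * exp (-r ^ 2)) r := by
  have hsqrt : √π ≠ 0 := by positivity
  refine (((hasDerivAt_exp_neg_sq r).div_const 2).sub
    (((hasDerivAt_exp_neg_sq_mul_wofzI_sub (a / 2) r).add
      (hasDerivAt_exp_neg_sq_mul_wofzI_add (a / 2) r)).const_mul (a * √π / 8))).congr_deriv ?_
  simp only [yukawaProfile]
  field_simp
  ring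

theorem yukawa3d_gaussian_solution_general (a : ℝ) :
    ∀ x : EuclideanSpace ℝ (Fin 3), x ≠ 0 →
      -laplacian (fun y : EuclideanSpace ℝ (Fin 3) =>
          (Real.sqrt π / 8) * (Real.exp (-‖y‖ ^ 2) / ‖y‖) *
            (wofzI (a / 2 - ‖y‖) - wofzI (a / 2 + ‖y‖))) x +
        a ^ 2 * ((Real.sqrt π / 8) * (Real.exp (-‖x‖ ^ 2) / ‖x‖) *
            (wofzI (a / 2 - ‖x‖) - wofzI (a / 2 + ‖x‖))) =
      Real.exp (-‖x‖ ^ 2) := by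
  intro x hx
  have hsolution : (fun y : EuclideanSpace ℝ (Fin 3) => √π / 8 * (exp (-‖y‖ ^ 2) / ‖y‖) *
      (wofzI (a / 2 - ‖y‖) - wofzI (a / 2 + ‖y‖))) = fun y => yukawaProfile a ‖y‖ / ‖y‖ := by
    ext y
    simp only [yukawaProfile]
    ring
  rw [hsolution, laplacian_div_norm (fun r _ => hasDerivAt_yukawaProfile a r)
    (fun r _ => hasDerivAt_yukawaProfileDeriv a r) hx]
  have hr : ‖x‖ ≠ 0 := norm_ne_zero_iff.2 hx
  simp only [yukawaProfile]
  field_simp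
  ring

theorem yukawa3d_gaussian_solution (a : ℝ) (ha : 0 < a) :
    ∀ x : EuclideanSpace ℝ (Fin 3), x ≠ 0 →
      -laplacian (fun y : EuclideanSpace ℝ (Fin 3) =>
          (Real.sqrt π / 8) * (Real.exp (-‖y‖ ^ 2) / ‖y‖) *
            (wofzI (a / 2 - ‖y‖) - wofzI (a / 2 + ‖y‖))) x +
        a ^ 2 * ((Real.sqrt π / 8) * (Real.exp (-‖x‖ ^ 2) / ‖x‖) *
            (wofzI (a / 2 - ‖x‖) - wofzI (a / 2 + ‖x‖))) =
      Real.exp (-‖x‖ ^ 2) :=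
  yukawa3d_gaussian_solution_general a
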